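/- (Heat kernel upper bound) Let (X,Q,π) be a finite Markov chain and let d denote the combinatorial graph distance on the underlying graph (x ∼ y iff x ≠ y and Q(x,y) > 0). Then for every natural number r, all t ≥ 0 and all x, y ∈ X with d(x,y) ≥ r: (P_t 𝟙_x)(y) ≤ t^r / r!, where 𝟙_x is the indicator function of x; equivalently, the heat kernel p_t(x,y) := (1/π(x)) (P_t 𝟙_x)(y) satisfies p_t(x,y) ≤ (1/π(x)) t^r/r!. -/

import Mathlib

open Finset

/-- The Markov chain Laplacian `Δf(x) = ∑_y Q(x,y)(f(y) - f(x))`. -/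
def lap {X : Type*} [Fintype X] (Q : X → X → ℝ) (f : X → ℝ) : X → ℝ :=
  fun x => ∑ y, Q x y * (f y - f x)

/-- The Laplacian as a linear map. -/
def lapL {X : Type*} [Fintype X] (Q : X → X → ℝ) : (X → ℝ) →ₗ[ℝ] (X → ℝ) where
  toFun := lap Q
  map_add' f g := by
    funext x
    simp only [lap, Pi.add_apply]
    rw [← Finset.sum_add_distrib]
    exact Finset.sum_congr rfl fun y _ => by ring
  map_smul' c f := by
    funext x
    simp only [lap, Pi.smul_apply, smul_eq_mul, RingHom.id_apply]
    rw [Finset.mul_sum]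
    exact Finset.sum_congr rfl fun y _ => by ring

/-- The heat semigroup `P_t = e^{tΔ}`. -/
noncomputable def heat {X : Type*} [Fintype X] [DecidableEq X]
    (Q : X → X → ℝ) (t : ℝ) (f : X → ℝ) : X → ℝ :=
  NormedSpace.exp (t • (LinearMap.toContinuousLinearMap (lapL Q))) f

/-- The underlying graph of the Markov chain: `x ∼ y` iff `x ≠ y` and
`Q(x,y) > 0` (reversibility makes this symmetric; we symmetrize explicitly). -/
def mcGraph {X : Type*} (Q : X → X → ℝ) : SimpleGraph X where
  Adj a b := a ≠ b ∧ 0 < Q a b ∧ 0 < Q b a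
  symm := ⟨fun a b h => ⟨h.1.symm, h.2.2, h.2.1⟩⟩
  loopless := ⟨fun a h => h.1 rfl⟩

open scoped Nat Matrix

/-! Since the rows of `Q` sum to `1`, `Δ = Q - I` and hence
`P_t = e^{-t} ∑ₙ (tⁿ/n!) Qⁿ`, so `(P_t 𝟙ₓ)(y) = e^{-t} ∑ₙ (tⁿ/n!) Qⁿ(y,x)`. The entries of the
stochastic matrix `Qⁿ` are at most `1`, and `Qⁿ(y,x) = 0` for `n < d(x,y)` since a nonzero entry
needs a walk of at most `n` steps from `y` to `x`. Therefore
`(P_t 𝟙ₓ)(y) ≤ e^{-t} ∑_{n ≥ r} tⁿ/n! ≤ (t^r/r!) e^{-t} ∑ₙ tⁿ/n! = t^r/r!`, using `r! n! ≤ (n+r)!`. -/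

theorem NormedSpace.exp_smul_sub_one {𝔸 : Type*} [NormedRing 𝔸] [NormedAlgebra ℝ 𝔸]
    [CompleteSpace 𝔸] (t : ℝ) (a : 𝔸) :
    exp (t • (a - 1)) = Real.exp (-t) • exp (t • a) := by
  have hsplit : t • (a - 1) = t • a + algebraMap ℝ 𝔸 (-t) := by
    rw [smul_sub, Algebra.algebraMap_eq_smul_one, neg_smul, sub_eq_add_neg]
  have hball (z : 𝔸) : z ∈ Metric.eball 0 (expSeries ℝ 𝔸).radius :=
    (expSeries_radius_eq_top ℝ 𝔸).symm ▸ edist_lt_top _ _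
  rw [hsplit, exp_add_of_commute_of_mem_ball (Algebra.commutes _ _).symm (hball _) (hball _),
    ← algebraMap_exp_comm, ← Real.exp_eq_exp_ℝ, ← Algebra.commutes, ← Algebra.smul_def]

theorem NormedSpace.hasSum_exp_apply {E : Type*} [NormedAddCommGroup E] [NormedSpace ℝ E]
    [CompleteSpace E] (A : E →L[ℝ] E) (v : E) :
    HasSum (fun n => (n ! : ℝ)⁻¹ • (A ^ n) v) (exp A v) :=
  (exp_series_hasSum_exp' (𝕂 := ℝ) A).mapL (ContinuousLinearMap.apply ℝ E v)

theorem lapL_eq_toLin'_sub_id {X : Type*} [Fintype X] [DecidableEq X] {Q : X → X → ℝ}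
    (hQrow : ∀ x, ∑ y, Q x y = 1) :
    lapL Q = Matrix.toLin' (Matrix.of Q) - LinearMap.id := by
  refine LinearMap.ext fun f => funext fun x => ?_
  simp [lapL, lap, Matrix.mulVec, dotProduct, mul_sub, ← sum_mul, hQrow]

theorem hasSum_exp_mul_heat {X : Type*} [Fintype X] [DecidableEq X] {Q : X → X → ℝ}
    (hQrow : ∀ x, ∑ y, Q x y = 1) (t : ℝ) (f : X → ℝ) (y : X) :
    HasSum (fun n => t ^ n / n ! * (Matrix.of Q ^ n *ᵥ f) y) (Real.exp t * heat Q t f y) := by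
  set M := LinearMap.toContinuousLinearMap (Matrix.toLin' (Matrix.of Q))
  have hM : LinearMap.toContinuousLinearMap (lapL Q) = M - 1 := by
    rw [lapL_eq_toLin'_sub_id hQrow, map_sub]; rfl
  have hheat : Real.exp t * heat Q t f y = NormedSpace.exp (t • M) f y := by
    rw [heat, hM, NormedSpace.exp_smul_sub_one, Real.exp_neg]
    simp [Real.exp_ne_zero]
  have hpow (n : ℕ) : (M ^ n) f = Matrix.of Q ^ n *ᵥ f := by
    rw [← ContinuousLinearMap.coe_coe, ContinuousLinearMap.toLinearMap_pow]
    exact congrFun (congrArg DFunLike.coe (Matrix.toLin'_pow _ n)).symm f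
  rw [hheat]
  convert Pi.hasSum.1 (NormedSpace.hasSum_exp_apply (t • M) f) y using 2 with n
  simp [smul_pow, hpow, div_eq_inv_mul, mul_assoc, mul_left_comm]

theorem Matrix.exists_walk_length_le_of_pow_apply_ne_zero {V R : Type*} [Fintype V]
    [DecidableEq V] [Semiring R] {G : SimpleGraph V} {A : Matrix V V R}
    (hA : ∀ z w, z ≠ w → A z w ≠ 0 → G.Adj z w) {n : ℕ} {z x : V} (h : (A ^ n) z x ≠ 0) :
    ∃ p : G.Walk z x, p.length ≤ n := by
  induction n generalizing z with
  | zero =>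
    obtain rfl : z = x := by by_contra hzx; simp [one_apply_ne hzx] at h
    exact ⟨.nil, le_rfl⟩
  | succ n ih =>
    rw [pow_succ', mul_apply] at h
    obtain ⟨w, -, hw⟩ := exists_ne_zero_of_sum_ne_zero h
    obtain ⟨p, hp⟩ := ih (right_ne_zero_of_mul hw)
    by_cases hzw : z = w
    · subst hzw
      exact ⟨p, hp.trans n.le_succ⟩
    · exact ⟨.cons (hA z w hzw (left_ne_zero_of_mul hw)) p, by simpa using hp⟩

theorem mcGraph_adj_of_pos {X : Type*} {Q : X → X → ℝ} {pr : X → ℝ} (hpr : ∀ x, 0 < pr x)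
    (hrev : ∀ x y, pr x * Q x y = pr y * Q y x) {z w : X} (hzw : z ≠ w) (h : 0 < Q z w) :
    (mcGraph Q).Adj z w := by
  refine ⟨hzw, h, pos_of_mul_pos_right ?_ (hpr w).le⟩
  rw [← hrev]
  exact mul_pos (hpr z) h

theorem pow_add_div_factorial_le {t : ℝ} (ht : 0 ≤ t) (i r : ℕ) :
    t ^ (i + r) / (i + r)! ≤ t ^ r / r ! * (t ^ i / i !) := by
  have hfac : ((r ! * i ! : ℕ) : ℝ) ≤ (i + r)! := by
    exact_mod_cast Nat.le_of_dvd (Nat.factorial_pos _)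
      (add_comm r i ▸ Nat.factorial_mul_factorial_dvd_factorial_add r i)
  calc t ^ (i + r) / (i + r)! ≤ t ^ (i + r) / ((r ! * i ! : ℕ) : ℝ) :=
        div_le_div_of_nonneg_left (by positivity) (by positivity) hfac
    _ = t ^ r / r ! * (t ^ i / i !) := by push_cast; ring

theorem le_pow_div_factorial_mul_exp_of_hasSum {t S : ℝ} {a : ℕ → ℝ} {r : ℕ} (ht : 0 ≤ t)
    (ha : ∀ n, a n ≤ 1) (hr : ∀ n < r, a n = 0) (hS : HasSum (fun n => t ^ n / n ! * a n) S) :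
    S ≤ t ^ r / r ! * Real.exp t := by
  have htail : HasSum (fun i => t ^ (i + r) / (i + r)! * a (i + r)) S := by
    have hhead : ∑ i ∈ range r, t ^ i / i ! * a i = 0 :=
      sum_eq_zero fun i hi => by rw [hr i (mem_range.1 hi), mul_zero]
    simpa [hhead] using (hasSum_nat_add_iff' r).2 hS
  have hexp : HasSum (fun i => t ^ r / r ! * (t ^ i / i !)) (t ^ r / r ! * Real.exp t) :=
    (Real.exp_eq_exp_ℝ ▸ NormedSpace.expSeries_div_hasSum_exp t).mul_left _
  refine hasSum_le (fun i => ?_) htail hexp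
  calc t ^ (i + r) / (i + r)! * a (i + r) ≤ t ^ (i + r) / (i + r)! :=
        mul_le_of_le_one_right (by positivity) (ha _)
    _ ≤ t ^ r / r ! * (t ^ i / i !) := pow_add_div_factorial_le ht i r

theorem heat_kernel_upper_bound
    {X : Type*} [Fintype X] [DecidableEq X]
    (Q : X → X → ℝ) (pr : X → ℝ)
    (hQ : ∀ x y, 0 ≤ Q x y) (hQrow : ∀ x, ∑ y, Q x y = 1)
    (hpr : ∀ x, 0 < pr x)
    (hrev : ∀ x y, pr x * Q x y = pr y * Q y x)
    (r : ℕ) (t : ℝ) (ht : 0 ≤ t) (x y : X)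
    (hdist : ∀ p : (mcGraph Q).Walk x y, r ≤ p.length) :
    heat Q t (fun z => if z = x then (1:ℝ) else 0) y ≤ t^r / (Nat.factorial r)
    ∧ (1 / pr x) * heat Q t (fun z => if z = x then (1:ℝ) else 0) y
        ≤ (1 / pr x) * (t^r / (Nat.factorial r)) := by
  have hind : (fun z => if z = x then (1 : ℝ) else 0) = Pi.single x 1 := by
    ext z; simp [Pi.single_apply]
  have hstoch : Matrix.of Q ∈ Matrix.rowStochastic ℝ X :=
    Matrix.mem_rowStochastic_iff_sum.2 ⟨hQ, hQrow⟩
  have hvanish : ∀ n < r, (Matrix.of Q ^ n) y x = 0 := fun n hn => by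
    by_contra h
    obtain ⟨p, hp⟩ := Matrix.exists_walk_length_le_of_pow_apply_ne_zero
      (fun z w hzw hQzw => mcGraph_adj_of_pos hpr hrev hzw ((hQ z w).lt_of_ne' hQzw)) h
    have hlen := hdist p.reverse
    rw [SimpleGraph.Walk.length_reverse] at hlen
    omega
  have hseries := hasSum_exp_mul_heat hQrow t (Pi.single x 1) y
  simp only [Matrix.mulVec_single_one, Matrix.col_apply] at hseries
  have hbound := le_pow_div_factorial_mul_exp_of_hasSum ht
    (fun n => Matrix.le_one_of_mem_rowStochastic (pow_mem hstoch n)) hvanish hseries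
  have hheat := le_of_mul_le_mul_left (hbound.trans_eq (mul_comm _ _)) (Real.exp_pos t)
  rw [hind]
  exact ⟨hheat, mul_le_mul_of_nonneg_left hheat (one_div_nonneg.2 (hpr x).le)⟩
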